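/- Suppose coefficients satisfy β_k^l = 2γ_{k+l}^l for all k ∈ ℤ_K and l ∈ ℤ_K\{0}. Then for any array (u_{k,j}), ∑_{k∈ℤ_K}∑_{j∈ℤ_M}∑_{l≠0} u_{k,j}[β_k^l(b_{k,j}^l − b_{k,j−1}^l) + γ_k^l(r_{k,j}^l − r_{k,j−1}^l)] = 0, where b_{k,j}^l = (1/2)(u_{k,j}u_{k+l,j} + u_{k,j+1}u_{k+l,j+1}) and r_{k,j}^l = u_{k−l,j}u_{k−l,j+1}. -/

import Mathlib

/-!
Fix `l ≠ 0` and put `g k = γ_k^l`, so that `β_k^l = 2 g (k + l)`. The `b`-difference collapses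
to `2 (b_{k,j}^l - b_{k,j-1}^l) = u_{k,j+1} u_{k+l,j+1} - u_{k,j-1} u_{k+l,j-1}`, and the summand
becomes a sum of two differences `P (p + a) - P p` of an expression `P`, cubic in `u`, at a grid
point `p = (k, j)` and its translate by `a = (l, 1)` resp. `a = (-l, 1)`. Translation permutes
the finite group `ℤ_K × ℤ_M`, so each such difference sums to zero.
-/

/-- `b_{k,j}^l = (1/2)(u_{k,j}u_{k+l,j} + u_{k,j+1}u_{k+l,j+1})`. -/
noncomputable def bTerm (K M : ℕ) (k : ZMod K) (j : ZMod M) (l : ZMod K)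
    (u : (ZMod K × ZMod M) → ℝ) : ℝ :=
  (1 / 2) * (u (k, j) * u (k + l, j) + u (k, j + 1) * u (k + l, j + 1))

/-- `r_{k,j}^l = u_{k−l,j}u_{k−l,j+1}`. -/
noncomputable def rTerm (K M : ℕ) (k : ZMod K) (j : ZMod M) (l : ZMod K)
    (u : (ZMod K × ZMod M) → ℝ) : ℝ :=
  u (k - l, j) * u (k - l, j + 1)

theorem Fintype.sum_comp_add_right_sub_eq_zero {G R : Type*} [AddGroup G] [Fintype G]
    [AddCommGroup R] (f : G → R) (a : G) : ∑ x, (f (x + a) - f x) = 0 := by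
  rw [Finset.sum_sub_distrib, sub_eq_zero]
  exact Equiv.sum_comp (Equiv.addRight a) f

theorem two_mul_bTerm_sub_bTerm_sub_one {K M : ℕ} (k : ZMod K) (j : ZMod M) (l : ZMod K)
    (u : ZMod K × ZMod M → ℝ) :
    2 * (bTerm K M k j l u - bTerm K M k (j - 1) l u)
      = u (k, j + 1) * u (k + l, j + 1) - u (k, j - 1) * u (k + l, j - 1) := by
  simp only [bTerm, sub_add_cancel]
  ring

theorem sum_u_mul_bTerm_rTerm_diff_eq_zero {K M : ℕ} [NeZero K] [NeZero M]
    (g : ZMod K → ℝ) (l : ZMod K) (u : ZMod K × ZMod M → ℝ) :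
    ∑ k : ZMod K, ∑ j : ZMod M,
        u (k, j) * (2 * g (k + l) * (bTerm K M k j l u - bTerm K M k (j - 1) l u)
          + g k * (rTerm K M k j l u - rTerm K M k (j - 1) l u)) = 0 := by
  let P : ZMod K × ZMod M → ℝ := fun p =>
    g p.1 * u (p.1 - l, p.2 - 1) * u (p.1 - l, p.2) * u p
  let Q : ZMod K × ZMod M → ℝ := fun p =>
    g (p.1 + l) * u (p.1, p.2 - 1) * u p * u (p.1 + l, p.2 - 1)
  have summand_eq : ∀ p : ZMod K × ZMod M,
      u p * (2 * g (p.1 + l) * (bTerm K M p.1 p.2 l u - bTerm K M p.1 (p.2 - 1) l u)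
          + g p.1 * (rTerm K M p.1 p.2 l u - rTerm K M p.1 (p.2 - 1) l u))
        = (P (p + (l, 1)) - P p) + (Q (p + (-l, 1)) - Q p) := by
    rintro ⟨k, j⟩
    rw [mul_assoc 2, mul_left_comm 2, two_mul_bTerm_sub_bTerm_sub_one]
    simp only [P, Q, rTerm, Prod.mk_add_mk, add_sub_cancel_right,
      sub_add_cancel, ← sub_eq_add_neg]
    ring
  rw [← Fintype.sum_prod_type' (f := fun k j => u (k, j) * _)]
  simp only [summand_eq, Finset.sum_add_distrib, Fintype.sum_comp_add_right_sub_eq_zero, add_zero]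

theorem sum_u_mul_br_diff_eq_zero_general (K M : ℕ) [NeZero K] [NeZero M]
    (β γ : ZMod K → ZMod K → ℝ)
    (hβγ : ∀ k l : ZMod K, l ≠ 0 → β k l = 2 * γ (k + l) l)
    (u : (ZMod K × ZMod M) → ℝ) :
    ∑ k : ZMod K, ∑ j : ZMod M, ∑ l ∈ Finset.univ.erase (0 : ZMod K),
        u (k, j) * (β k l * (bTerm K M k j l u - bTerm K M k (j - 1) l u)
          + γ k l * (rTerm K M k j l u - rTerm K M k (j - 1) l u)) = 0 := by
  rw [Finset.sum_congr rfl fun k _ => Finset.sum_comm, Finset.sum_comm]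
  refine Finset.sum_eq_zero fun l hl => ?_
  simp only [hβγ _ l (Finset.ne_of_mem_erase hl)]
  exact sum_u_mul_bTerm_rTerm_diff_eq_zero (fun k => γ k l) l u

/-- If `β_k^l = 2γ_{k+l}^l` for all `k` and `l ≠ 0`, then
`∑_{k,j,l≠0} u_{k,j}[β_k^l(b_{k,j}^l − b_{k,j−1}^l) + γ_k^l(r_{k,j}^l − r_{k,j−1}^l)] = 0`. -/
theorem sum_u_mul_br_diff_eq_zero (K M : ℕ) [NeZero K] [NeZero M] (hK : 2 ≤ K) (hM : 2 ≤ M)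
    (β γ : ZMod K → ZMod K → ℝ)
    (hβγ : ∀ k l : ZMod K, l ≠ 0 → β k l = 2 * γ (k + l) l)
    (u : (ZMod K × ZMod M) → ℝ) :
    ∑ k : ZMod K, ∑ j : ZMod M, ∑ l ∈ Finset.univ.erase (0 : ZMod K),
        u (k, j) * (β k l * (bTerm K M k j l u - bTerm K M k (j - 1) l u)
          + γ k l * (rTerm K M k j l u - rTerm K M k (j - 1) l u)) = 0 :=
  sum_u_mul_br_diff_eq_zero_general K M β γ hβγ u
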